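/- Let P be a logic program over a finite set of atoms A and let γ be a colour-preserving automorphism of the coloured digraph G_P. Then the permutation π of A determined by γ (a, pos) = (π a, pos) is a symmetry of P, i.e., P^π = P; moreover γ r = r^π for every rule vertex r ∈ P. -/
import Mathlib


/-- A (disjunctive) rule over a set of atoms `A`: a triple of finite sets of atoms
(head, positive body, negative body). -/
structure Rule (A : Type*) where
  head : Finset A
  pos : Finset A
  neg : Finset A
deriving DecidableEq

variable {A : Type*} [DecidableEq A]

/-- `M` is a model of a rule `(H, B⁺, ∅)` (the negative body is ignored; it is used
only on rules of reducts, whose negative bodies are empty): if `B⁺ ⊆ M` then `H ∩ M ≠ ∅`. -/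
def Rule.models (M : Finset A) (r : Rule A) : Prop :=
  r.pos ⊆ M → (r.head ∩ M).Nonempty

/-- The reduct `P^M` of a program `P` relative to `M`. -/
def reduct (P : Finset (Rule A)) (M : Finset A) : Finset (Rule A) :=
  (P.filter fun r => r.neg ∩ M = ∅).image fun r => ⟨r.head, r.pos, ∅⟩

/-- `M` is a ⊆-minimal model of the set of rules `Q`. -/
def IsMinModel (Q : Finset (Rule A)) (M : Finset A) : Prop :=
  (∀ r ∈ Q, Rule.models M r) ∧ ∀ N : Finset A, N ⊂ M → ¬ (∀ r ∈ Q, Rule.models N r)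

/-- `M` is an answer set of `P` if `M` is a ⊆-minimal model of the reduct `P^M`. -/
def IsAnswerSet (P : Finset (Rule A)) (M : Finset A) : Prop :=
  IsMinModel (reduct P M) M

/-- The image of a rule under a permutation of atoms. -/
def Rule.perm (π : Equiv.Perm A) (r : Rule A) : Rule A :=
  ⟨r.head.image π, r.pos.image π, r.neg.image π⟩

/-- The image of a program under a permutation of atoms. -/
def permProg (π : Equiv.Perm A) (P : Finset (Rule A)) : Finset (Rule A) :=
  P.image (Rule.perm π)

/-- A symmetry of a logic program `P` is a permutation of its atoms that does not
change `P`. -/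
def IsSymmetry (π : Equiv.Perm A) (P : Finset (Rule A)) : Prop :=
  permProg π P = P

/-- The vertex set of the coloured digraph `G_P` of a program `P`:
positive/negative literal vertices `(a, pos)`/`(a, neg)` (with `pos = true`,
`neg = false`), plus one vertex for each rule of `P`. -/
def Vertex (A : Type*) (P : Finset (Rule A)) : Type _ :=
  (A × Bool) ⊕ {r : Rule A // r ∈ P}

/-- The colouring of `G_P`: colour 1 for positive-literal vertices, colour 2 for
negative-literal vertices, colour 3 for rule vertices. -/
def colour {A : Type*} {P : Finset (Rule A)} : Vertex A P → Fin 3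
  | Sum.inl (_, true) => 0
  | Sum.inl (_, false) => 1
  | Sum.inr _ => 2

/-- The edge relation of `G_P`: consistency edges `(a, pos) → (a, neg)` for every
atom `a`, and for every rule `r ∈ P` the edges `(b, pos) → r` for `b ∈ pos r`,
`(c, neg) → r` for `c ∈ neg r`, and `r → (a, pos)` for `a ∈ head r`. -/
def Edge {A : Type*} (P : Finset (Rule A)) : Vertex A P → Vertex A P → Prop
  | Sum.inl (a, true), Sum.inl (b, false) => a = b
  | Sum.inl (b, true), Sum.inr r => b ∈ (r : Rule A).pos
  | Sum.inl (c, false), Sum.inr r => c ∈ (r : Rule A).neg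
  | Sum.inr r, Sum.inl (a, true) => a ∈ (r : Rule A).head
  | _, _ => False

/-- **Coloured-digraph automorphisms of `G_P` induce symmetries of `P`.**
If `γ` is a colour-preserving automorphism of the coloured digraph `G_P` of a logic
program `P` over a finite set of atoms `A`, then the permutation `π` of `A` determined
by `γ (a, pos) = (π a, pos)` is a symmetry of `P`, i.e. `P^π = P`; moreover
`γ r = r^π` for every rule vertex `r ∈ P`. -/
theorem graph_automorphism_induces_symmetry {A : Type*} [DecidableEq A] [Fintype A]
    (P : Finset (Rule A)) (γ : Vertex A P ≃ Vertex A P)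
    (hcol : ∀ v : Vertex A P, colour (γ v) = colour v)
    (hedge : ∀ u v : Vertex A P, Edge P u v ↔ Edge P (γ u) (γ v))
    (π : Equiv.Perm A)
    (hπ : ∀ a : A, γ (Sum.inl (a, true)) = Sum.inl (π a, true)) :
    IsSymmetry π P ∧
      ∀ (r : Rule A) (hr : r ∈ P), ∃ hr' : Rule.perm π r ∈ P,
        γ (Sum.inr ⟨r, hr⟩) = Sum.inr ⟨Rule.perm π r, hr'⟩ := by
  have hneg : ∀ a : A, γ (Sum.inl (a, false)) = Sum.inl (π a, false) := by
    intro a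
    have hc := hcol (Sum.inl (a, false))
    have he := (hedge (Sum.inl (a, true)) (Sum.inl (a, false))).mp rfl
    rw [hπ] at he
    rcases hγ : γ (Sum.inl (a, false)) with ⟨b, _ | _⟩ | r
    · rw [hγ] at he; subst he; rfl
    · rw [hγ] at hc; simp [colour] at hc
    · rw [hγ] at hc; simp [colour] at hc
  have key : ∀ (s t : Finset A), (∀ a, a ∈ s ↔ π a ∈ t) → t = s.image π := by
    intro s t h
    ext x
    rw [Finset.mem_image]
    constructor
    · intro hx
      exact ⟨π.symm x, (h _).mpr (by simpa using hx), by simp⟩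
    · rintro ⟨a, ha, rfl⟩
      exact (h a).mp ha
  have hrule : ∀ (r : Rule A) (hr : r ∈ P), ∃ hr' : Rule.perm π r ∈ P,
      γ (Sum.inr ⟨r, hr⟩) = Sum.inr ⟨Rule.perm π r, hr'⟩ := by
    intro r hr
    rcases hγ : γ (Sum.inr ⟨r, hr⟩) with ⟨b, _ | _⟩ | ⟨r', hr'⟩
    · have hc := hcol (Sum.inr ⟨r, hr⟩); rw [hγ] at hc; simp [colour] at hc
    · have hc := hcol (Sum.inr ⟨r, hr⟩); rw [hγ] at hc; simp [colour] at hc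
    · have hpos : ∀ a, a ∈ r.pos ↔ π a ∈ r'.pos := by
        intro a
        have h := hedge (Sum.inl (a, true)) (Sum.inr ⟨r, hr⟩)
        rw [hπ, hγ] at h
        simpa [Edge] using h
      have hneg' : ∀ a, a ∈ r.neg ↔ π a ∈ r'.neg := by
        intro a
        have h := hedge (Sum.inl (a, false)) (Sum.inr ⟨r, hr⟩)
        rw [hneg, hγ] at h
        simpa [Edge] using h
      have hhead : ∀ a, a ∈ r.head ↔ π a ∈ r'.head := by
        intro a
        have h := hedge (Sum.inr ⟨r, hr⟩) (Sum.inl (a, true))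
        rw [hπ, hγ] at h
        simpa [Edge] using h
      have hr'eq : r' = Rule.perm π r := by
        obtain ⟨h1, p1, n1⟩ := r'
        simp only [Rule.perm, Rule.mk.injEq]
        exact ⟨key _ _ hhead, key _ _ hpos, key _ _ hneg'⟩
      subst hr'eq
      exact ⟨hr', rfl⟩
  have hsub : permProg π P ⊆ P := by
    intro q hq
    rw [permProg, Finset.mem_image] at hq
    obtain ⟨r, hr, rfl⟩ := hq
    exact (hrule r hr).1
  have hinj : Function.Injective (Rule.perm π) := by
    intro r s h
    cases r; cases s
    simp only [Rule.perm, Rule.mk.injEq] at h ⊢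
    exact ⟨Finset.image_injective π.injective h.1,
      Finset.image_injective π.injective h.2.1,
      Finset.image_injective π.injective h.2.2⟩
  have hcard : (permProg π P).card = P.card := Finset.card_image_of_injective _ hinj
  exact ⟨Finset.eq_of_subset_of_card_le hsub hcard.ge, hrule⟩
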